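/- arXiv:2205.01794 — 2 statements merged into one kernel-verified Lean document; each statement's English description precedes it below -/
import Mathlib

section
/- If the Afriat inequalities for the dataset {(α_t, β_t) : t = 1,…,K} are feasible, then the dataset satisfies the Generalized Axiom of Revealed Preference (GARP). -/
/-- Euclidean inner product on `Fin m → ℝ`. -/
noncomputable def ip {m : ℕ} (x y : Fin m → ℝ) : ℝ := ∑ i, x i * y i

lemma ip_sub {m : ℕ} (x y z : Fin m → ℝ) : ip x (y - z) = ip x y - ip x z := by
  simp [ip, mul_sub, Finset.sum_sub_distrib]

/-- If the Afriat inequalities for the dataset `{(α_t, β_t) : t = 1,…,K}`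
(indexed here by `t = 0,…,K-1`) are feasible, then the dataset satisfies the Generalized
Axiom of Revealed Preference (GARP). -/
theorem stmt_1 {m K : ℕ} (α β : ℕ → Fin m → ℝ)
    (hα : ∀ t < K, ∀ i, 0 < α t i) (hβ : ∀ t < K, ∀ i, 0 ≤ β t i)
    (hfeas : ∃ uu lam : ℕ → ℝ, (∀ t < K, 0 < lam t) ∧
      ∀ s < K, ∀ t < K, uu s - uu t - lam t * ip (α t) (β s - β t) ≤ 0) :
    ∀ k < K, (∀ t < k, ip (α t) (β (t + 1)) ≤ ip (α t) (β t)) →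
      ip (α k) (β k) ≤ ip (α k) (β 0) := by
  obtain ⟨u, lam, hpos, h⟩ := hfeas
  intro k hk hchain
  have hmono : ∀ j ≤ k, u j ≤ u 0 := by
    intro j hj
    induction j with
    | zero => exact le_refl _
    | succ n ih =>
      have hnk : n < k := hj
      have hnK : n < K := lt_trans hnk hk
      have hn1K : n + 1 ≤ K := Nat.le_of_lt_succ (Nat.succ_lt_succ (lt_of_lt_of_le hnk (le_of_lt hk)))
      have hn1K' : n + 1 < K := lt_of_le_of_lt hj hk
      have h1 := h (n + 1) hn1K' n hnK
      rw [ip_sub] at h1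
      have h2 := hchain n hnk
      have h3 := hpos n hnK
      have : u (n + 1) ≤ u n := by nlinarith
      exact le_trans this (ih (le_of_lt hnk))
  have huk : u k ≤ u 0 := hmono k le_rfl
  have hK0 : 0 < K := Nat.pos_of_ne_zero (by omega)
  have h1 := h 0 hK0 k hk
  rw [ip_sub] at h1
  have h3 := hpos k hk
  nlinarith
end

section
/- Suppose reals u_1,…,u_K and strictly positive reals λ_1,…,λ_K satisfy the Afriat inequalities for the dataset {(α_t, β_t) : t = 1,…,K}, and let β̂_t = β_t + w_t for arbitrary vectors w_t ∈ ℝ^m. Then the same (u_t, λ_t) satisfy the relaxed Afriat inequalities for the noisy dataset {(α_t, β̂_t)} with slack ε = max_{i,j∈{1,…,K}} ⟨α_i, w_i − w_j⟩; consequently the statistic φ* of the noisy dataset satisfies φ* ≤ max_{i,j} ⟨α_i, w_i − w_j⟩. -/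
/-- The relaxed Afriat inequalities with slack `ε` for the noisy dataset
`{(α_t, β̂_t) : t = 0,…,K-1}` are feasible. -/
def RelaxedAfriatFeasible {m : ℕ} (K : ℕ) (α βh : ℕ → Fin m → ℝ) (ε : ℝ) : Prop :=
  ∃ uu lam : ℕ → ℝ, (∀ t < K, 0 < lam t) ∧
    ∀ s < K, ∀ t < K, uu s - uu t - lam t * ip (α t) (βh s - βh t) ≤ lam t * ε

/-
Adding noise `w` shifts the term `⟨α_t, β_s − β_t⟩` of each Afriat inequality by
`⟨α_t, w_s − w_t⟩ = −⟨α_t, w_t − w_s⟩ ≥ −ε`, so with `λ_t > 0` the exact inequality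
`≤ 0` becomes the relaxed one `≤ λ_t ε`. Hence `ε` lies in the set defining `φ*`; that set is
bounded below by `0` (take `s = t` in the relaxed inequalities), so `φ* ≤ ε`.
-/

theorem ip_eq_dotProduct {m : ℕ} (x y : Fin m → ℝ) : ip x y = x ⬝ᵥ y := rfl

theorem afriat_ineq_add_noise {m : ℕ} {us ut l ε : ℝ} {a bs bt ws wt : Fin m → ℝ}
    (h : us - ut - l * ip a (bs - bt) ≤ 0) (hl : 0 ≤ l) (hw : ip a (wt - ws) ≤ ε) :
    us - ut - l * ip a ((bs + ws) - (bt + wt)) ≤ l * ε := by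
  have hsplit : ip a ((bs + ws) - (bt + wt)) = ip a (bs - bt) - ip a (wt - ws) := by
    rw [show (bs + ws) - (bt + wt) = (bs - bt) - (wt - ws) by abel]
    simp only [ip_eq_dotProduct, dotProduct_sub]
  rw [hsplit]
  linarith [mul_le_mul_of_nonneg_left hw hl]

theorem RelaxedAfriatFeasible.nonneg {m K : ℕ} {α βh : ℕ → Fin m → ℝ} {ε : ℝ} (hK : 0 < K)
    (h : RelaxedAfriatFeasible K α βh ε) : 0 ≤ ε := by
  obtain ⟨uu, lam, hlam, hineq⟩ := h
  have h0 := hineq 0 hK 0 hK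
  simp only [sub_self, ip_eq_dotProduct, dotProduct_zero, mul_zero] at h0
  exact nonneg_of_mul_nonneg_right h0 (hlam 0 hK)

theorem sInf_relaxedAfriatFeasible_le {m K : ℕ} {α βh : ℕ → Fin m → ℝ} {ε : ℝ} (hK : 0 < K)
    (h : RelaxedAfriatFeasible K α βh ε) :
    sInf {ε' : ℝ | RelaxedAfriatFeasible K α βh ε'} ≤ ε :=
  csInf_le ⟨0, fun _ hε' => hε'.nonneg hK⟩ h

theorem stmt_10_general {m K : ℕ} (hK : 0 < K) (α β w : ℕ → Fin m → ℝ)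
    (uu lam : ℕ → ℝ) (hlam : ∀ t < K, 0 < lam t)
    (hAfriat : ∀ s < K, ∀ t < K, uu s - uu t - lam t * ip (α t) (β s - β t) ≤ 0)
    (βh : ℕ → Fin m → ℝ) (hβh : ∀ t, βh t = β t + w t)
    (ε : ℝ)
    (hε : ε = ((Finset.range K) ×ˢ (Finset.range K)).sup'
      ((Finset.nonempty_range_iff.mpr hK.ne').product (Finset.nonempty_range_iff.mpr hK.ne'))
      (fun p => ip (α p.1) (w p.1 - w p.2))) :
    (∀ s < K, ∀ t < K, uu s - uu t - lam t * ip (α t) (βh s - βh t) ≤ lam t * ε) ∧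
    sInf {ε' : ℝ | RelaxedAfriatFeasible K α βh ε'} ≤ ε := by
  have relaxed : ∀ s < K, ∀ t < K,
      uu s - uu t - lam t * ip (α t) (βh s - βh t) ≤ lam t * ε := by
    intro s hs t ht
    have hslack : ip (α t) (w t - w s) ≤ ε := by
      rw [hε]
      exact Finset.le_sup' (fun p => ip (α p.1) (w p.1 - w p.2)) (b := (t, s))
        (Finset.mem_product.mpr ⟨Finset.mem_range.mpr ht, Finset.mem_range.mpr hs⟩)
    rw [hβh, hβh]
    exact afriat_ineq_add_noise (hAfriat s hs t ht) (hlam t ht).le hslack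
  exact ⟨relaxed, sInf_relaxedAfriatFeasible_le hK ⟨uu, lam, hlam, relaxed⟩⟩

/-- Suppose reals `u_1,…,u_K` and strictly positive reals `λ_1,…,λ_K`
satisfy the Afriat inequalities for the dataset `{(α_t, β_t)}`, and let `β̂_t = β_t + w_t`
for arbitrary vectors `w_t ∈ ℝ^m`. Then the same `(u_t, λ_t)` satisfy the relaxed Afriat
inequalities for the noisy dataset with slack `ε = max_{i,j} ⟨α_i, w_i − w_j⟩`;
consequently the statistic `φ*` of the noisy dataset satisfies
`φ* ≤ max_{i,j} ⟨α_i, w_i − w_j⟩`. (Indices run over `0,…,K-1`; the pair `p` below is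
`p = (i, j)`.) -/
theorem stmt_10 {m K : ℕ} (hK : 0 < K) (α β w : ℕ → Fin m → ℝ)
    (hα : ∀ t < K, ∀ i, 0 < α t i) (hβ : ∀ t < K, ∀ i, 0 ≤ β t i)
    (uu lam : ℕ → ℝ) (hlam : ∀ t < K, 0 < lam t)
    (hAfriat : ∀ s < K, ∀ t < K, uu s - uu t - lam t * ip (α t) (β s - β t) ≤ 0)
    (βh : ℕ → Fin m → ℝ) (hβh : ∀ t, βh t = β t + w t)
    (ε : ℝ)
    (hε : ε = ((Finset.range K) ×ˢ (Finset.range K)).sup'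
      ((Finset.nonempty_range_iff.mpr hK.ne').product (Finset.nonempty_range_iff.mpr hK.ne'))
      (fun p => ip (α p.1) (w p.1 - w p.2))) :
    (∀ s < K, ∀ t < K, uu s - uu t - lam t * ip (α t) (βh s - βh t) ≤ lam t * ε) ∧
    sInf {ε' : ℝ | RelaxedAfriatFeasible K α βh ε'} ≤ ε :=
  stmt_10_general hK α β w uu lam hlam hAfriat βh hβh ε hε
end
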